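/- arXiv:1701.00653 — 6 statements merged into one kernel-verified Lean document; each statement's English description precedes it below -/
import Mathlib

section
/- Let L be a countable first-order language containing a unary predicate U, and let T be an L-theory. For every n ≥ 1 there exist an expanded language L⁺ ⊇ L and an L⁺-theory T⁺ such that for every infinite cardinal β: T has a model of cardinality β^{+n} in which U is interpreted by a set of cardinality β if and only if T⁺ has a model of cardinality β^{+(n+1)} in which U is interpreted by a set of cardinality β. -/
/-!
`T⁺` describes a model of `T` sitting inside a larger structure as the predicate `inner`
(containing `U`), together with a total relation `below` each of whose initial segments
`{y | below y x}` is injected into `inner` by `code x`. A total relation on `M` whose initial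
segments have size at most `c ≥ ℵ₀` forces `|M| ≤ c⁺`: otherwise take `c⁺` points; their initial
segments cover at most `c⁺` points, and a point outside all of them has, by totality, all `c⁺`
points in its own initial segment. Conversely an initial well-order of a set of size `κ⁺` has all
initial segments of size at most `κ`.

Hence a `(κ⁺, λ)`-model of `T⁺` contains a model of `T` of size at least `κ` containing `U`,
which Löwenheim–Skolem cuts down to a `(κ, λ)`-model; and a `(κ, λ)`-model `N` of `T` becomes
a `(κ⁺, λ)`-model of `T⁺` on `N ⊕ W` with `|W| = κ⁺`.
-/

open FirstOrder Cardinal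

/-- `T` has a model of cardinality `κ` in which the unary predicate `U`
is interpreted by a set of cardinality `lam` (a `(κ, lam)`-model). -/
def HasModelPair (L : FirstOrder.Language.{0,0}) (U : L.Relations 1) (T : L.Theory)
    (κ lam : Cardinal.{0}) : Prop :=
  ∃ (M : Type) (i : L.Structure M), T.Model M ∧ #M = κ ∧
    #{x : M | @Language.Structure.RelMap L M i 1 U ![x]} = lam

open Set Order

universe u

namespace Cardinal

variable {X : Type u}

theorem mk_le_succ_of_total {c : Cardinal.{u}} (hc : ℵ₀ ≤ c) {r : X → X → Prop} (hr : Std.Total r)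
    (hsmall : ∀ x, #{y | r y x} ≤ c) : #X ≤ succ c := by
  by_contra! h
  obtain ⟨A, hA⟩ := le_mk_iff_exists_set.mp h.le
  have hB : #(⋃ a ∈ A, {y | r y a}) < #X :=
    calc #(⋃ a ∈ A, {y | r y a}) ≤ #A * ⨆ a : A, #{y | r y a} := mk_biUnion_le _ _
      _ ≤ succ c * c := mul_le_mul' hA.le (ciSup_le' fun a => hsmall a)
      _ = succ c := mul_eq_left (hc.trans (le_succ c)) (le_succ c) (aleph0_pos.trans_le hc).ne'
      _ < #X := h
  obtain ⟨z, hz⟩ : ∃ z, z ∉ ⋃ a ∈ A, {y | r y a} := by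
    by_contra! hB'
    rw [eq_univ_of_forall hB', mk_univ] at hB
    exact hB.false
  have hAz : A ⊆ {y | r y z} := fun a ha =>
    (hr.total a z).resolve_right fun hza => hz (mem_biUnion ha hza)
  exact (lt_succ c).not_ge (hA ▸ (mk_le_mk_of_subset hAz).trans (hsmall z))

theorem exists_total_mk_lt (hX : ℵ₀ ≤ #X) :
    ∃ r : X → X → Prop, Std.Total r ∧ ∀ x, #{y | r y x} < #X := by
  obtain ⟨_, _, h⟩ := exists_ord_eq_type_lt X
  exact ⟨(· ≤ ·), inferInstance, fun x => mk_Iic_lt x h hX⟩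

theorem exists_injOn_of_total {V : Set X} {r : X → X → Prop} (hr : Std.Total r)
    (hsmall : ∀ x, #{y | r y x} ≤ #V) :
    ∃ F : X → X → X, (∀ x y, F x y ∈ V) ∧ ∀ x, InjOn (F x) {y | r y x} := by
  have e x : {y | r y x} ↪ V := ((le_def _ _).mp (hsmall x)).some
  classical
  refine ⟨fun x y => if h : r y x then e x ⟨y, h⟩ else e x ⟨x, (hr.total x x).elim id id⟩,
    fun x y => by dsimp only; split <;> exact Subtype.prop _, fun x y hy z hz hyz => ?_⟩
  dsimp only at hyz
  rw [dif_pos (show r y x from hy), dif_pos (show r z x from hz)] at hyz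
  exact congrArg Subtype.val ((e x).injective (Subtype.ext hyz))

end Cardinal

namespace FirstOrder.Language

open Structure

variable {L L' : Language}

def BoundedFormula.relativize {α : Type*} (v : L.Relations 1) :
    ∀ {n}, L.BoundedFormula α n → L.BoundedFormula α n
  | _, falsum => falsum
  | _, equal t₁ t₂ => equal t₁ t₂
  | _, rel R ts => rel R ts
  | _, imp φ ψ => φ.relativize v ⟹ ψ.relativize v
  | n, all φ => ∀' (v.boundedFormula₁ &(Fin.last n) ⟹ φ.relativize v)

def Theory.relativize (v : L.Relations 1) (T : L.Theory) : L.Theory :=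
  BoundedFormula.relativize v '' T

section Relativize

variable (φ : L →ᴸ L') (v : L'.Relations 1) {M : Type*} [L.Structure M] [L'.Structure M]
  [φ.IsExpansionOn M] {N : Type*} [L.Structure N] (j : N ↪[L] M)
  (hj : range j = {x | RelMap v ![x]})
include hj

theorem BoundedFormula.realize_relativize_onBoundedFormula {α : Type*} {n : ℕ}
    (ψ : L.BoundedFormula α n) (w : α → N) (xs : Fin n → N) :
    ((φ.onBoundedFormula ψ).relativize v).Realize (j ∘ w) (j ∘ xs) ↔ ψ.Realize w xs := by
  induction ψ with
  | falsum => rfl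
  | equal t₁ t₂ =>
    exact (φ.realize_onBoundedFormula _).trans ((IsAtomic.equal t₁ t₂).isQF.realize_embedding j)
  | rel R ts =>
    exact (φ.realize_onBoundedFormula _).trans ((IsAtomic.rel R ts).isQF.realize_embedding j)
  | imp ψ₁ ψ₂ ih₁ ih₂ =>
    simp only [LHom.onBoundedFormula, relativize, realize_imp, ih₁, ih₂]
  | all ψ ih =>
    have hv (a : M) : RelMap v ![a] ↔ a ∈ range j := by rw [hj, mem_ofPred_eq]
    simp only [LHom.onBoundedFormula, relativize, realize_all, realize_imp, realize_rel₁,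
      Function.comp_apply, Term.realize_var, Sum.elim_inr, Fin.snoc_last, hv, forall_mem_range,
      ← Fin.comp_snoc, ih]

theorem Theory.model_relativize_onTheory_iff (T : L.Theory) :
    M ⊨ (φ.onTheory T).relativize v ↔ N ⊨ T := by
  simp only [Theory.model_iff, Theory.relativize, LHom.onTheory, forall_mem_image]
  refine forall₂_congr fun ψ _ => ?_
  have h := BoundedFormula.realize_relativize_onBoundedFormula φ v j hj ψ default default
  rwa [Subsingleton.elim (j ∘ default) default, Subsingleton.elim (j ∘ default) default] at h

end Relativize

theorem Embedding.mk_setOf_relMap_eq {M N : Type u} [L.Structure M] [L.Structure N]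
    (j : N ↪[L] M) {R : L.Relations 1} (hR : ∀ x, RelMap R ![x] → x ∈ range j) :
    #{x : M | RelMap R ![x]} = #{y : N | RelMap R ![y]} := by
  have hj (y : N) : RelMap R ![j y] ↔ RelMap R ![y] := by
    rw [← j.map_rel R ![y] ]
    exact Iff.of_eq (congrArg _ (funext (Fin.forall_fin_one.2 rfl)))
  have himage : {x : M | RelMap R ![x]} = j '' {y | RelMap R ![y]} := by
    ext x
    constructor
    · intro hx
      obtain ⟨y, rfl⟩ := hR x hx
      exact ⟨y, (hj y).1 hx, rfl⟩
    · rintro ⟨y, hy, rfl⟩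
      exact (hj y).2 hy
  rw [himage, mk_image_eq j.injective]

theorem exists_embedding_sum_relMap_mem_range (N W : Type*) [L.Structure N] [Nonempty N] :
    ∃ (_ : L.Structure (N ⊕ W)) (j : N ↪[L] N ⊕ W),
      ∀ {n} (R : L.Relations n) (xs : Fin n → N ⊕ W), RelMap R xs → ∀ i, xs i ∈ range j := by
  let π : N ⊕ W → N := Sum.elim id fun _ => Classical.arbitrary N
  let _ : L.Structure (N ⊕ W) :=
    { funMap := fun f xs => Sum.inl (funMap f (π ∘ xs))
      RelMap := fun R xs => ∃ ys, xs = Sum.inl ∘ ys ∧ RelMap R ys }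
  let j : N ↪[L] N ⊕ W :=
    { toFun := Sum.inl
      inj' := Sum.inl_injective
      map_fun' := fun _ _ => rfl
      map_rel' := fun R ys => ⟨fun ⟨zs, h, hz⟩ => Sum.inl_injective.comp_left h ▸ hz,
        fun h => ⟨ys, rfl, h⟩⟩ }
  exact ⟨inferInstance, j, fun R xs ⟨ys, h, _⟩ i => ⟨ys i, (congrFun h i).symm⟩⟩

inductive succCodingFunc : ℕ → Type
  | code : succCodingFunc 2

inductive succCodingRel : ℕ → Type
  | inner : succCodingRel 1
  | below : succCodingRel 2

protected def succCoding : Language := ⟨succCodingFunc, succCodingRel⟩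

namespace succCoding

abbrev code : Language.succCoding.Functions 2 := .code
abbrev inner : Language.succCoding.Relations 1 := .inner
abbrev below : Language.succCoding.Relations 2 := .below

def codeInner : Language.succCoding.Sentence :=
  ∀' ∀' inner.boundedFormula₁ (code.apply₂ &0 &1)

def codeInjOn : Language.succCoding.Sentence :=
  ∀' ∀' (below.boundedFormula₂ &1 &0 ⟹ ∀' (below.boundedFormula₂ &2 &0 ⟹
    code.apply₂ &0 &1 =' code.apply₂ &0 &2 ⟹ &1 =' &2))

protected def theory : Language.succCoding.Theory := {below.total, codeInner, codeInjOn}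

noncomputable def innerClosed {k : ℕ} (f : L.Functions k) : (L.sum Language.succCoding).Sentence :=
  (BoundedFormula.iInf (fun i => (LHom.sumInr.onRelation inner).boundedFormula₁ &i) ⟹
    (LHom.sumInr.onRelation inner).boundedFormula₁
      (func (LHom.sumInl.onFunction f) fun i => &i)).alls

def innerContains (U : L.Relations 1) : (L.sum Language.succCoding).Sentence :=
  ∀' ((LHom.sumInl.onRelation U).boundedFormula₁ &0 ⟹
    (LHom.sumInr.onRelation inner).boundedFormula₁ &0)

variable {M : Type*} [Language.succCoding.Structure M]

theorem realize_codeInner :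
    M ⊨ codeInner ↔ ∀ x y : M, RelMap inner ![funMap code ![x, y] ] := by
  simp [codeInner, Sentence.Realize, Formula.Realize, Fin.snoc]

theorem realize_codeInjOn :
    M ⊨ codeInjOn ↔ ∀ x : M, InjOn (fun y => funMap code ![x, y]) {y | RelMap below ![y, x]} := by
  simp [codeInjOn, Sentence.Realize, Formula.Realize, Fin.snoc, InjOn]

theorem model_theory_iff : M ⊨ succCoding.theory ↔
    Std.Total (fun x y : M => RelMap below ![x, y]) ∧
    (∀ x y : M, RelMap inner ![funMap code ![x, y] ]) ∧
    ∀ x : M, InjOn (fun y => funMap code ![x, y]) {y | RelMap below ![y, x]} := by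
  simp only [succCoding.theory, Theory.model_insert_iff, Theory.model_singleton_iff,
    Relations.realize_total, realize_codeInner, realize_codeInjOn]

variable [L.Structure M] [(L.sum Language.succCoding).Structure M]
  [(LHom.sumInl : L →ᴸ L.sum Language.succCoding).IsExpansionOn M]
  [(LHom.sumInr : Language.succCoding →ᴸ L.sum Language.succCoding).IsExpansionOn M]

theorem realize_innerClosed {k : ℕ} (f : L.Functions k) :
    M ⊨ innerClosed f ↔
      ∀ xs : Fin k → M, (∀ i, RelMap inner ![xs i]) → RelMap inner ![funMap f xs] := by
  simp [innerClosed, Sentence.Realize, Term.realize, -LHom.sumInr_onRelation]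

theorem realize_innerContains (U : L.Relations 1) :
    M ⊨ innerContains U ↔ ∀ x : M, RelMap U ![x] → RelMap inner ![x] := by
  simp [innerContains, Sentence.Realize, Formula.Realize, Fin.snoc, -LHom.sumInr_onRelation,
    -LHom.sumInl_onRelation]

end succCoding

open succCoding

noncomputable def Theory.succExpansion (U : L.Relations 1) (T : L.Theory) :
    (L.sum Language.succCoding).Theory :=
  (LHom.sumInl.onTheory T).relativize (LHom.sumInr.onRelation inner)
    ∪ LHom.sumInr.onTheory succCoding.theory
    ∪ range (fun f : Σ k, L.Functions k => innerClosed f.2) ∪ {innerContains U}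

theorem Theory.model_succExpansion_iff {M : Type*} [L.Structure M]
    [Language.succCoding.Structure M] [(L.sum Language.succCoding).Structure M]
    [(LHom.sumInl : L →ᴸ L.sum Language.succCoding).IsExpansionOn M]
    [(LHom.sumInr : Language.succCoding →ᴸ L.sum Language.succCoding).IsExpansionOn M]
    {N : Type*} [L.Structure N] (j : N ↪[L] M) (hj : range j = {x | RelMap inner ![x]})
    (U : L.Relations 1) (T : L.Theory) :
    M ⊨ T.succExpansion U ↔
      N ⊨ T ∧ M ⊨ succCoding.theory ∧ ∀ x : M, RelMap U ![x] → x ∈ range j := by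
  have hv (x : M) : RelMap inner ![x] ↔ x ∈ range j := by rw [hj, mem_ofPred_eq]
  have hj' : range j =
      {x | RelMap ((LHom.sumInr : Language.succCoding →ᴸ L.sum _).onRelation inner) ![x]} := by
    simp only [LHom.map_onRelation, hj]
  have hclosed : M ⊨ range (fun f : Σ k, L.Functions k => innerClosed f.2) := by
    refine (Theory.model_iff _).2 (forall_mem_range.2 fun ⟨k, f⟩ =>
      (realize_innerClosed f).2 fun xs hxs => ?_)
    simp only [hv] at hxs ⊢
    choose ys hys using hxs
    rw [← funext hys]
    exact ⟨funMap f ys, j.map_fun f ys⟩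
  simp only [Theory.succExpansion, Theory.model_union_iff,
    Theory.model_relativize_onTheory_iff LHom.sumInl _ j hj', LHom.onTheory_model, hclosed,
    Theory.model_singleton_iff, realize_innerContains, hv, and_true, and_assoc]

end FirstOrder.Language

open FirstOrder.Language Structure succCoding

section HasModelPair

variable {L : FirstOrder.Language.{0, 0}} {T : L.Theory}

theorem hasModelPair_of_le_mk (hL : L.card ≤ ℵ₀) (U : L.Relations 1) {M : Type} [L.Structure M]
    [M ⊨ T] {κ : Cardinal.{0}} (hκ : ℵ₀ ≤ κ) (hU : #{x : M | RelMap U ![x]} ≤ κ) (hM : κ ≤ #M) :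
    HasModelPair L U T κ #{x : M | RelMap U ![x]} := by
  obtain ⟨S, hUS, hS⟩ := exists_elementarySubstructure_card_eq L {x : M | RelMap U ![x]} κ hκ
    (by simpa using hU) (by simpa using hL.trans hκ) (by simpa using hM)
  refine ⟨S, inferInstance, inferInstance, by simpa using hS, ?_⟩
  exact (S.subtype.toEmbedding.mk_setOf_relMap_eq fun x hx => ⟨⟨x, hUS hx⟩, rfl⟩).symm

theorem HasModelPair.succExpansion {U : L.Relations 1} {κ lam : Cardinal.{0}} (hκ : ℵ₀ ≤ κ)
    (h : HasModelPair L U T κ lam) :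
    HasModelPair (L.sum Language.succCoding) (LHom.sumInl.onRelation U) (T.succExpansion U)
      (succ κ) lam := by
  obtain ⟨N, _, _, rfl, rfl⟩ := h
  have : Nonempty N := mk_ne_zero_iff.1 (aleph0_pos.trans_le hκ).ne'
  obtain ⟨_, j, hj⟩ := exists_embedding_sum_relMap_mem_range (L := L) N (succ #N).out
  have hX : #(N ⊕ (succ #N).out) = succ #N := by
    simpa using add_eq_right (hκ.trans (le_succ _)) (le_succ _)
  obtain ⟨r, hr, hsmall⟩ := exists_total_mk_lt (hX ▸ hκ.trans (le_succ _))
  obtain ⟨F, hFj, hFinj⟩ := exists_injOn_of_total (V := range j) hr fun x => by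
    simpa [mk_range_eq j j.injective, hX, lt_succ_iff] using hsmall x
  let _ : Language.succCoding.Structure (N ⊕ (succ #N).out) :=
    { funMap := fun | .code => fun xs => F (xs 0) (xs 1)
      RelMap := fun
        | .inner => fun xs => xs 0 ∈ range j
        | .below => fun xs => r (xs 0) (xs 1) }
  refine ⟨N ⊕ (succ #N).out, inferInstance, ?_, hX, ?_⟩
  · exact (Theory.model_succExpansion_iff j rfl U T).2
      ⟨inferInstance, model_theory_iff.2 ⟨hr, hFj, hFinj⟩, fun x hx => hj U ![x] hx 0⟩
  · simpa using j.mk_setOf_relMap_eq fun x hx => hj U ![x] hx 0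

theorem HasModelPair.of_succExpansion (hL : L.card ≤ ℵ₀) {U : L.Relations 1} {κ lam : Cardinal.{0}}
    (hlam : ℵ₀ ≤ lam) (hlamκ : lam ≤ κ)
    (h : HasModelPair (L.sum Language.succCoding) (LHom.sumInl.onRelation U) (T.succExpansion U)
      (succ κ) lam) :
    HasModelPair L U T κ lam := by
  obtain ⟨M, _, hM, hMκ, hU⟩ := h
  let _ := (LHom.sumInl : L →ᴸ L.sum Language.succCoding).reduct M
  let _ := (LHom.sumInr : Language.succCoding →ᴸ L.sum Language.succCoding).reduct M
  let S : L.Substructure M :=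
    { carrier := {x | RelMap inner ![x]}
      fun_mem := fun f xs hxs => (realize_innerClosed f).1
        (hM.realize_of_mem _ (mem_union_left _ (mem_union_right _ ⟨⟨_, f⟩, rfl⟩))) xs hxs }
  obtain ⟨hS, hcoding, hUS⟩ := (Theory.model_succExpansion_iff S.subtype
    (by rw [S.coe_subtype, Subtype.range_coe]; rfl) U T).1 hM
  obtain ⟨hr, hcode, hinj⟩ := model_theory_iff.1 hcoding
  have hUS' : #{x : S | RelMap U ![x]} = lam := by
    rw [← S.subtype.mk_setOf_relMap_eq hUS]
    exact hU
  have hSinf : ℵ₀ ≤ #S := hlam.trans (hUS' ▸ mk_set_le _)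
  have hMS : #M ≤ succ #S := mk_le_succ_of_total hSinf hr fun x =>
    (mk_image_eq_of_injOn _ _ (hinj x)).symm.le.trans
      (mk_le_mk_of_subset (image_subset_iff.2 fun y _ => hcode x y))
  have hκS : κ ≤ #S := succ_le_succ_iff.1 (hMκ ▸ hMS)
  simpa [hUS'] using hasModelPair_of_le_mk hL U (hlam.trans hlamκ) (hUS' ▸ hlamκ) hκS

end HasModelPair

theorem stmt0_general (L : FirstOrder.Language.{0,0}) (hL : L.card ≤ ℵ₀) (U : L.Relations 1)
    (T : L.Theory) (n : ℕ) :
    ∃ (L' : FirstOrder.Language.{0,0}) (φ : L →ᴸ L') (T' : L'.Theory),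
      ∀ β : Cardinal.{0}, ℵ₀ ≤ β →
        (HasModelPair L U T ((Order.succ)^[n] β) β ↔
          HasModelPair L' (φ.onRelation U) T' ((Order.succ)^[n + 1] β) β) := by
  refine ⟨L.sum Language.succCoding, LHom.sumInl, T.succExpansion U, fun β hβ => ?_⟩
  rw [Function.iterate_succ_apply']
  exact ⟨HasModelPair.succExpansion (hβ.trans (le_succ_iterate n β)),
    HasModelPair.of_succExpansion hL hβ (le_succ_iterate n β)⟩

/-- for every countable language `L` with a unary predicate `U`, every
`L`-theory `T` and every `n ≥ 1`, there are an expansion `L⁺ ⊇ L` (given by a language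
morphism `φ : L →ᴸ L'`, with `U` corresponding to `φ.onRelation U`) and an `L⁺`-theory `T⁺`
such that for every infinite cardinal `β`, `T` has a `(β^{+n}, β)`-model iff `T⁺` has a
`(β^{+(n+1)}, β)`-model. -/
theorem stmt0 (L : FirstOrder.Language.{0,0}) (hL : L.card ≤ ℵ₀) (U : L.Relations 1)
    (T : L.Theory) (n : ℕ) (hn : 1 ≤ n) :
    ∃ (L' : FirstOrder.Language.{0,0}) (φ : L →ᴸ L') (T' : L'.Theory),
      ∀ β : Cardinal.{0}, ℵ₀ ≤ β →
        (HasModelPair L U T ((Order.succ)^[n] β) β ↔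
          HasModelPair L' (φ.onRelation U) T' ((Order.succ)^[n + 1] β) β) :=
  stmt0_general L hL U T n
end

section
/- Let L = {U, F} as above with T the theory asserting F codes an injection from the universe into subsets of U. If 2^{ℵ₁} < ℵ₃, then T has no (ℵ₃, ℵ₁)-model, while T always has a (2^{ℵ₀}, ℵ₀)-model. In particular, if 2^{ℵ₀} = 2^{ℵ₁} = ℵ₂, then T has an (ℵ₂, ℵ₀)-model but no (ℵ₃, ℵ₁)-model, so the transfer principle (ℵ₂,ℵ₀) → (ℵ₃,ℵ₁) fails. -/
open FirstOrder Cardinal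
open Language

/-- Relation symbols of the language `{U, F}`: a unary `U` and a binary `F`. -/
inductive UFRel : ℕ → Type
  | U : UFRel 1
  | F : UFRel 2

/-- The language `{U, F}` with one unary predicate `U` and one binary predicate `F`. -/
def LUF : FirstOrder.Language.{0,0} := ⟨fun _ => Empty, UFRel⟩

/-- The unary predicate symbol `U`. -/
abbrev symU : LUF.Relations 1 := UFRel.U

/-- The binary predicate symbol `F`. -/
abbrev symF : LUF.Relations 2 := UFRel.F

/-- `M` satisfies the theory `T` asserting that `x ↦ F_x = {y : F(x,y)}` is an injection
of the universe into subsets of `U`: (1) `∀ x y, F(x,y) → U(y)`; (2) `x ≠ x' → F_x ≠ F_{x'}`. -/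
def IsTStruct (M : Type) (i : LUF.Structure M) : Prop :=
  (∀ x y : M, i.RelMap symF ![x, y] → i.RelMap symU ![y]) ∧
  ∀ x x' : M, x ≠ x' →
    {y : M | i.RelMap symF ![x, y]} ≠ {y : M | i.RelMap symF ![x', y]}

/-- `T` has a `(κ, lam)`-model: a model of cardinality `κ` in which `U` is interpreted
by a set of cardinality `lam`. -/
def TPair (κ lam : Cardinal.{0}) : Prop :=
  ∃ (M : Type) (i : LUF.Structure M), IsTStruct M i ∧ #M = κ ∧
    #{y : M | i.RelMap symU ![y]} = lam

/-- The transfer principle `(κ, lam) → (κ', lam')`: every countable theory (in a language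
with a distinguished unary predicate) with a `(κ, lam)`-model has a `(κ', lam')`-model. -/
def Transfer (κ lam κ' lam' : Cardinal.{0}) : Prop :=
  ∀ (L : FirstOrder.Language.{0,0}) (U : L.Relations 1) (T : L.Theory), L.card ≤ ℵ₀ →
    (∃ (M : Type) (i : L.Structure M), T.Model M ∧ #M = κ ∧
      #{x : M | @Language.Structure.RelMap L M i 1 U ![x]} = lam) →
    ∃ (M : Type) (i : L.Structure M), T.Model M ∧ #M = κ' ∧
      #{x : M | @Language.Structure.RelMap L M i 1 U ![x]} = lam'

instance instSubUF {n : ℕ} : Subsingleton (LUF.Relations n) := ⟨by rintro ⟨⟩ ⟨⟩ <;> rfl⟩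

lemma LUF_card : LUF.card ≤ ℵ₀ := by
  have : Countable LUF.Symbols := by
    unfold Language.Symbols
    have h1 : IsEmpty (Σ l, LUF.Functions l) := ⟨by rintro ⟨_, ⟨⟩⟩⟩
    have h2 : Countable (Σ l, LUF.Relations l) := by
      have hi : Function.Injective (fun x : Σ l, LUF.Relations l => x.1) := by
        rintro ⟨a, ra⟩ ⟨b, rb⟩ h
        simp only at h
        subst h
        exact congrArg _ (Subsingleton.elim ra rb)
      exact hi.countable
    infer_instance
  exact Cardinal.mk_le_aleph0

def phi1 : LUF.Sentence :=
  ∀' ∀' (symF.boundedFormula₂ (&0) (&1) ⟹ symU.boundedFormula₁ (&1))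

def phi2 : LUF.Sentence :=
  ∀' ∀' ((∀' ((symF.boundedFormula₂ (&0) (&2)) ⇔ (symF.boundedFormula₂ (&1) (&2)))) ⟹
    Term.bdEqual (&0) (&1))

def Tthy : LUF.Theory := {phi1, phi2}

lemma model_iff (M : Type) (i : LUF.Structure M) [Nonempty M] :
    (@Theory.Model LUF M i Tthy) ↔ IsTStruct M i := by
  constructor
  · intro h
    have h1 := h.realize_of_mem phi1 (by simp [Tthy])
    have h2 := h.realize_of_mem phi2 (by simp [Tthy])
    simp [phi1, phi2, Sentence.Realize, Formula.Realize, Fin.snoc] at h1 h2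
    refine ⟨h1, fun x x' hne heq => hne (h2 x x' fun y => ?_)⟩
    exact ⟨fun hy => (Set.ext_iff.mp heq y).mp hy, fun hy => (Set.ext_iff.mp heq y).mpr hy⟩
  · rintro ⟨t1, t2⟩
    refine ⟨fun {φ} hφ => ?_⟩
    rcases hφ with h | h
    · subst h
      simp [phi1, Sentence.Realize, Formula.Realize, Fin.snoc]
      exact t1
    · rw [Set.mem_singleton_iff] at h
      subst h
      simp [phi2, Sentence.Realize, Formula.Realize, Fin.snoc]
      intro x x' hiff
      by_contra hne
      exact t2 x x' hne (Set.ext fun y => hiff y)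

lemma tpair_le {κ lam : Cardinal.{0}} (h : TPair κ lam) : κ ≤ 2 ^ lam := by
  obtain ⟨M, i, ⟨h1, h2⟩, hM, hU⟩ := h
  rw [← hM, ← hU, ← Cardinal.mk_set]
  apply Cardinal.mk_le_of_injective
    (f := fun x => {y : {y : M | i.RelMap symU ![y]} | i.RelMap symF ![x, y.1]})
  intro x x' hxx
  by_contra hne
  apply h2 x x' hne
  ext y
  constructor
  · intro hy
    have hu : y ∈ {y : M | i.RelMap symU ![y]} := h1 x y hy
    have := Set.ext_iff.mp hxx ⟨y, hu⟩
    exact this.mp hy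
  · intro hy
    have hu : y ∈ {y : M | i.RelMap symU ![y]} := h1 x' y hy
    have := Set.ext_iff.mp hxx ⟨y, hu⟩
    exact this.mpr hy

def Bstruct : LUF.Structure (Set ℕ) where
  funMap := fun f _ => f.elim
  RelMap := fun {n} r => match r with
    | UFRel.U => fun v => ∃ m : ℕ, v 0 = {m}
    | UFRel.F => fun v => ∃ m : ℕ, v 1 = {m} ∧ m ∈ v 0

lemma Bmodel : IsTStruct (Set ℕ) Bstruct ∧ #(Set ℕ) = 2 ^ aleph.{0} 0 ∧
    #{y : Set ℕ | Bstruct.RelMap symU ![y]} = aleph.{0} 0 := by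
  have hB : ∀ x y : Set ℕ, Bstruct.RelMap symF ![x, y] ↔ ∃ m : ℕ, y = {m} ∧ m ∈ x := fun x y => by
    show (∃ m : ℕ, (![x, y] : Fin 2 → Set ℕ) 1 = {m} ∧ m ∈ (![x, y] : Fin 2 → Set ℕ) 0) ↔ _
    simp
  have hBU : ∀ y : Set ℕ, Bstruct.RelMap symU ![y] ↔ ∃ m : ℕ, y = {m} := fun y => by
    show (∃ m : ℕ, (![y] : Fin 1 → Set ℕ) 0 = {m}) ↔ _
    simp
  refine ⟨⟨?_, ?_⟩, ?_, ?_⟩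
  · rintro x y ⟨m, hm, _⟩
    exact ⟨m, hm⟩
  · intro x x' hne heq
    apply hne
    ext n
    constructor
    · intro hn
      have : ({n} : Set ℕ) ∈ {y : Set ℕ | Bstruct.RelMap symF ![x, y]} := ⟨n, rfl, hn⟩
      rw [heq] at this
      obtain ⟨m, hm, hmx⟩ := this
      rwa [Set.singleton_eq_singleton_iff.mp hm]
    · intro hn
      have : ({n} : Set ℕ) ∈ {y : Set ℕ | Bstruct.RelMap symF ![x', y]} := ⟨n, rfl, hn⟩
      rw [← heq] at this
      obtain ⟨m, hm, hmx⟩ := this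
      rwa [Set.singleton_eq_singleton_iff.mp hm]
  · rw [Cardinal.mk_set, Cardinal.mk_nat, Cardinal.aleph_zero]
  · have : {y : Set ℕ | Bstruct.RelMap symU ![y]} = Set.range (fun n : ℕ => ({n} : Set ℕ)) := by
      ext y
      simp only [Set.mem_setOf_eq, Set.mem_range, hBU]
      exact ⟨fun ⟨m, hm⟩ => ⟨m, hm.symm⟩, fun ⟨m, hm⟩ => ⟨m, hm.symm⟩⟩
    rw [this, Cardinal.mk_range_eq _ Set.singleton_injective, Cardinal.mk_nat,
      Cardinal.aleph_zero]


universe u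

lemma aleph_down0 : Cardinal.lift.{u, 0} (aleph.{0} 0) = aleph.{u} 0 := by
  rw [Cardinal.lift_aleph, Ordinal.lift_zero]

lemma aleph_down1 : Cardinal.lift.{u, 0} (aleph.{0} 1) = aleph.{u} 1 := by
  rw [Cardinal.lift_aleph, Ordinal.lift_one]

lemma aleph_down2 : Cardinal.lift.{u, 0} (aleph.{0} 2) = aleph.{u} 2 := by
  rw [Cardinal.lift_aleph, Ordinal.lift_ofNat]

lemma aleph_down3 : Cardinal.lift.{u, 0} (aleph.{0} 3) = aleph.{u} 3 := by
  rw [Cardinal.lift_aleph, Ordinal.lift_ofNat]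

lemma lt_down (h : 2 ^ aleph.{u} 1 < aleph.{u} 3) : 2 ^ aleph.{0} 1 < aleph.{0} 3 := by
  rw [← Cardinal.lift_lt.{0, u}, Cardinal.lift_two_power, aleph_down1, aleph_down3]
  simpa using h

lemma eq_down0 (h : 2 ^ aleph.{u} 0 = aleph.{u} 2) : 2 ^ aleph.{0} 0 = aleph.{0} 2 := by
  rw [← Cardinal.lift_inj.{0, u}, Cardinal.lift_two_power, aleph_down0, aleph_down2]
  simpa using h

lemma eq_down1 (h : 2 ^ aleph.{u} 1 = aleph.{u} 2) : 2 ^ aleph.{0} 1 = aleph.{0} 2 := by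
  rw [← Cardinal.lift_inj.{0, u}, Cardinal.lift_two_power, aleph_down1, aleph_down2]
  simpa using h

/-- if `2 ^ ℵ₁ < ℵ₃` then `T` has no `(ℵ₃, ℵ₁)`-model; `T` always has a
`(2 ^ ℵ₀, ℵ₀)`-model; and if `2 ^ ℵ₀ = 2 ^ ℵ₁ = ℵ₂` then `T` has an `(ℵ₂, ℵ₀)`-model but
no `(ℵ₃, ℵ₁)`-model, so the transfer principle `(ℵ₂, ℵ₀) → (ℵ₃, ℵ₁)` fails. -/
theorem stmt5 :
    (2 ^ aleph 1 < aleph 3 → ¬ TPair (aleph 3) (aleph 1)) ∧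
    TPair (2 ^ aleph 0) (aleph 0) ∧
    ((2 ^ aleph 0 = aleph 2 ∧ 2 ^ aleph 1 = aleph 2) →
      TPair (aleph 2) (aleph 0) ∧ ¬ TPair (aleph 3) (aleph 1) ∧
        ¬ Transfer (aleph 2) (aleph 0) (aleph 3) (aleph 1)) := by
  have hno : 2 ^ aleph.{0} 1 < aleph.{0} 3 → ¬ TPair (aleph 3) (aleph 1) := fun hlt h =>
    absurd (tpair_le h) (not_le.mpr hlt)
  have hB := Bmodel
  have hTP : TPair (2 ^ aleph.{0} 0) (aleph.{0} 0) := ⟨Set ℕ, Bstruct, hB.1, hB.2.1, hB.2.2⟩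
  refine ⟨fun hlt => hno (lt_down hlt), hTP, fun ⟨h0, h1⟩ => ?_⟩
  have h0' := eq_down0 h0
  have h1' := eq_down1 h1
  have hlt : 2 ^ aleph.{0} 1 < aleph.{0} 3 := by
    rw [h1']; exact aleph_lt_aleph.mpr (by exact_mod_cast (by norm_num : (2:ℕ) < 3))
  have hTP2 : TPair (aleph 2) (aleph 0) := by rwa [h0'] at hTP
  refine ⟨hTP2, hno hlt, fun tr => ?_⟩
  obtain ⟨M, i, him, hm2, hu0⟩ := hTP2
  have hne : Nonempty M := by
    rw [← Cardinal.mk_ne_zero_iff, hm2]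
    exact (aleph_pos 2).ne'
  obtain ⟨N, j, hjm, hn3, hu1⟩ := tr LUF symU Tthy LUF_card
    ⟨M, i, (model_iff M i).mpr him, hm2, hu0⟩
  have hneN : Nonempty N := by
    rw [← Cardinal.mk_ne_zero_iff, hn3]
    exact (aleph_pos 3).ne'
  exact hno hlt ⟨N, j, (model_iff N j).mp hjm, hn3, hu1⟩
end

section
/- Conversely, in the setting of Lemma 3.1, if M⁺ is a model of T⁺ whose universe has cardinality β^{+(n+1)} and whose interpretation of U has cardinality β, then the L-reduct of M⁺ restricted to W_n^{M⁺} is a model of T of cardinality β^{+n} in which U is interpreted by a set of cardinality β. In particular, |W_i^{M⁺}| = β^{+i} for every i ≤ n. -/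
open FirstOrder Cardinal Set

/-- The interpretation of the unary predicate `U` in `X`. -/
def USet (L : FirstOrder.Language.{0,0}) (U : L.Relations 1) (X : Type) [L.Structure X] :
    Set X :=
  {x | Language.Structure.RelMap U ![x]}

/-- Axioms (2)–(7) of Lemma 3.1, stated semantically for a structure `X` in a language
containing `U`, with a binary relation `lt` (for `<`), unary predicates `W 0, …, W n`,
a binary relation `Fneg` (for `F₋₁`) and ternary relations `Fi i` (for `F_i`, `i ≤ n`):
`lt` is a linear order; each `W i` is an initial segment of `W (i+1)` and `W n` is an
initial segment of the universe; `U ⊆ W n`; `Fneg` is the graph of a bijection from `U`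
onto `W 0`; for `i < n` and `x ∈ W (i+1) \ W i`, `Fi i x` is the graph of a bijection from
`W i` onto the `lt`-predecessors of `x`; for `x ∉ W n`, `Fi n x` is the graph of a
bijection from `W n` onto the `lt`-predecessors of `x`. -/
structure PlusAxioms (L : FirstOrder.Language.{0,0}) (U : L.Relations 1) (n : ℕ)
    (X : Type) [L.Structure X] (lt : X → X → Prop) (W : Fin (n + 1) → Set X)
    (Fneg : X → X → Prop) (Fi : Fin (n + 1) → X → X → X → Prop) : Prop where
  linear : IsLinearOrder X lt
  mono : ∀ i : Fin n, W i.castSucc ⊆ W i.succ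
  initialSeg : ∀ i : Fin n, ∀ x ∈ W i.castSucc, ∀ y ∈ W i.succ, lt y x → y ∈ W i.castSucc
  lastInitial : ∀ x ∈ W (Fin.last n), ∀ y, lt y x → y ∈ W (Fin.last n)
  Usub : USet L U X ⊆ W (Fin.last n)
  Fneg_dom : ∀ x y, Fneg x y → x ∈ USet L U X ∧ y ∈ W 0
  Fneg_fun : ∀ x ∈ USet L U X, ∃! y, Fneg x y
  Fneg_inv : ∀ y ∈ W 0, ∃! x, Fneg x y
  Fi_dom : ∀ i : Fin n, ∀ x ∈ W i.succ \ W i.castSucc, ∀ y z,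
    Fi i.castSucc x y z → y ∈ W i.castSucc ∧ z ∈ W i.succ ∧ lt z x
  Fi_fun : ∀ i : Fin n, ∀ x ∈ W i.succ \ W i.castSucc, ∀ y ∈ W i.castSucc,
    ∃! z, Fi i.castSucc x y z
  Fi_inv : ∀ i : Fin n, ∀ x ∈ W i.succ \ W i.castSucc, ∀ z ∈ W i.succ, lt z x →
    ∃! y, Fi i.castSucc x y z
  Fn_dom : ∀ x, x ∉ W (Fin.last n) → ∀ y z,
    Fi (Fin.last n) x y z → y ∈ W (Fin.last n) ∧ lt z x
  Fn_fun : ∀ x, x ∉ W (Fin.last n) → ∀ y ∈ W (Fin.last n), ∃! z, Fi (Fin.last n) x y z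
  Fn_inv : ∀ x, x ∉ W (Fin.last n) → ∀ z, lt z x → ∃! y, Fi (Fin.last n) x y z

/-!
The bijections `F₋₁` and `Fᵢ` give `|W₀| = |U| = β` and show that every element of `W_{i+1}`
(resp. of the universe) has at most `|Wᵢ|` (resp. `|W_n|`) predecessors. In a total order in
which every element has at most `κ ≥ ℵ₀` predecessors there are at most `κ⁺` elements, so each
of the `n + 1` steps `β = |W₀|, |W₁|, …, |W_n|, |X| = β^{+(n+1)}` is at most a successor, and
hence every one of them is exactly a successor.
-/

universe u

namespace Cardinal

variable {α : Type u}

theorem mk_eq_of_existsUnique_rel {β : Type u} {A : Set α} {B : Set β} {R : α → β → Prop}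
    (hR : ∀ a b, R a b → a ∈ A ∧ b ∈ B) (hA : ∀ a ∈ A, ∃! b, R a b)
    (hB : ∀ b ∈ B, ∃! a, R a b) : #A = #B := by
  choose f hf hf_uniq using hA
  refine mk_congr (Equiv.ofBijective (fun a => ⟨f a a.2, (hR _ _ (hf a a.2)).2⟩) ⟨?_, ?_⟩)
  · rintro ⟨a, ha⟩ ⟨a', ha'⟩ hfa
    have hb : f a ha ∈ B := (hR _ _ (hf a ha)).2
    have hRa' : R a' (f a ha) := by
      rw [show f a ha = f a' ha' from congrArg Subtype.val hfa]
      exact hf a' ha'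
    exact Subtype.ext ((hB _ hb).unique (hf a ha) hRa')
  · rintro ⟨b, hb⟩
    obtain ⟨a, hab, -⟩ := hB b hb
    have ha := (hR a b hab).1
    exact ⟨⟨a, ha⟩, Subtype.ext (hf_uniq a ha b hab).symm⟩

/- Otherwise a subset of size `κ⁺` has at most `κ⁺ · κ = κ⁺` elements below it, and an element
of `s` outside them lies above the whole subset. -/
theorem mk_le_succ_of_forall_mk_predecessors_le {s : Set α} {r : α → α → Prop}
    (htot : ∀ a b, r a b ∨ r b a) {κ : Cardinal} (hκ : ℵ₀ ≤ κ)
    (hpred : ∀ x ∈ s, #{y ∈ s | r y x} ≤ κ) : #s ≤ Order.succ κ := by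
  by_contra! hs
  obtain ⟨A, hAs, hA⟩ := le_mk_iff_exists_subset.1 hs.le
  have hbelow : #(⋃ a ∈ A, {y ∈ s | r y a}) < #s := by
    calc #(⋃ a ∈ A, {y ∈ s | r y a}) ≤ #A * ⨆ a : A, #{y ∈ s | r y a} := mk_biUnion_le _ _
      _ ≤ Order.succ κ * κ := by
          rw [hA]
          gcongr
          exact ciSup_le' fun a => hpred a (hAs a.2)
      _ = Order.succ κ := mul_eq_left (hκ.trans (Order.le_succ κ)) (Order.le_succ κ)
          (aleph0_pos.trans_le hκ).ne'
      _ < #s := hs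
  obtain ⟨x, hxs, hx⟩ : ∃ x ∈ s, x ∉ ⋃ a ∈ A, {y ∈ s | r y a} := by
    by_contra! hcover
    exact hbelow.not_ge (mk_le_mk_of_subset hcover)
  have hAx : A ⊆ {y ∈ s | r y x} := fun a ha =>
    ⟨hAs ha, (htot a x).resolve_right fun hxa => hx (Set.mem_biUnion ha ⟨hxs, hxa⟩)⟩
  exact (Order.lt_succ κ).not_ge (hA ▸ (mk_le_mk_of_subset hAx).trans (hpred x hxs))

end Cardinal

namespace Order

variable {α : Type*} [LinearOrder α] [SuccOrder α] {m : ℕ} {a : Fin (m + 1) → α}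

theorem le_iterate_succ_of_le_succ (hstep : ∀ i : Fin m, a i.succ ≤ succ (a i.castSucc))
    (i : Fin (m + 1)) (k : ℕ) (hk : (i : ℕ) + k ≤ m) : a ⟨i + k, by omega⟩ ≤ succ^[k] (a i) := by
  induction k with
  | zero => exact le_rfl
  | succ k ih =>
    rw [Function.iterate_succ_apply']
    exact (hstep ⟨i + k, by omega⟩).trans (succ_le_succ (ih (by omega)))

theorem eq_iterate_succ_of_le_succ [NoMaxOrder α]
    (hstep : ∀ i : Fin m, a i.succ ≤ succ (a i.castSucc))
    (htop : succ^[m] (a 0) ≤ a (Fin.last m)) (i : Fin (m + 1)) : a i = succ^[i] (a 0) := by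
  have hup := le_iterate_succ_of_le_succ hstep 0 i (by simp [i.is_le])
  have hdown := le_iterate_succ_of_le_succ hstep i (m - i) (by omega)
  rw [show (⟨(0 : Fin (m + 1)) + i, _⟩ : Fin (m + 1)) = i by ext; simp] at hup
  rw [show (⟨i + (m - i), _⟩ : Fin (m + 1)) = Fin.last m by ext; simp; omega] at hdown
  refine hup.antisymm ((succ_strictMono.iterate (m - i)).le_iff_le.1 ?_)
  rw [← Function.iterate_add_apply, Nat.sub_add_cancel i.is_le]
  exact htop.trans hdown

end Order

namespace PlusAxioms

variable {L : FirstOrder.Language.{0,0}} {U : L.Relations 1} {n : ℕ} {X : Type} [L.Structure X]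
  {lt : X → X → Prop} {W : Fin (n + 1) → Set X} {Fneg : X → X → Prop}
  {Fi : Fin (n + 1) → X → X → X → Prop}

theorem W_zero_subset (ax : PlusAxioms L U n X lt W Fneg Fi) (i : Fin (n + 1)) : W 0 ⊆ W i := by
  induction i using Fin.induction with
  | zero => exact subset_rfl
  | succ i ih => exact ih.trans (ax.mono i)

theorem mk_W_zero (ax : PlusAxioms L U n X lt W Fneg Fi) : #(W 0) = #(USet L U X) :=
  (mk_eq_of_existsUnique_rel ax.Fneg_dom ax.Fneg_fun ax.Fneg_inv).symm

theorem mk_W_succ_le (ax : PlusAxioms L U n X lt W Fneg Fi) (i : Fin n)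
    (hinf : ℵ₀ ≤ #(W i.castSucc)) : #(W i.succ) ≤ Order.succ #(W i.castSucc) := by
  refine mk_le_succ_of_forall_mk_predecessors_le ax.linear.total hinf fun x hx => ?_
  by_cases hxi : x ∈ W i.castSucc
  · exact mk_le_mk_of_subset fun y hy => ax.initialSeg i x hxi y hy.1 hy.2
  · have hx' : x ∈ W i.succ \ W i.castSucc := ⟨hx, hxi⟩
    exact (mk_eq_of_existsUnique_rel (ax.Fi_dom i x hx') (ax.Fi_fun i x hx')
      fun z hz => ax.Fi_inv i x hx' z hz.1 hz.2).ge

theorem mk_le_succ_mk_W_last (ax : PlusAxioms L U n X lt W Fneg Fi)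
    (hinf : ℵ₀ ≤ #(W (Fin.last n))) : #X ≤ Order.succ #(W (Fin.last n)) := by
  rw [← mk_univ]
  refine mk_le_succ_of_forall_mk_predecessors_le ax.linear.total hinf fun x _ => ?_
  by_cases hxn : x ∈ W (Fin.last n)
  · exact mk_le_mk_of_subset fun y hy => ax.lastInitial x hxn y hy.2
  · refine (mk_eq_of_existsUnique_rel (R := Fi (Fin.last n) x) (fun y z hyz => ?_)
      (ax.Fn_fun x hxn) fun z hz => ax.Fn_inv x hxn z hz.2).ge
    exact ⟨(ax.Fn_dom x hxn y z hyz).1, trivial, (ax.Fn_dom x hxn y z hyz).2⟩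

end PlusAxioms

theorem stmt7_general (L : FirstOrder.Language.{0,0}) (U : L.Relations 1)
    (n : ℕ) (β : Cardinal.{0}) (hβ : ℵ₀ ≤ β)
    (X : Type) [L.Structure X] (lt : X → X → Prop) (W : Fin (n + 1) → Set X)
    (Fneg : X → X → Prop) (Fi : Fin (n + 1) → X → X → X → Prop)
    (ax : PlusAxioms L U n X lt W Fneg Fi)
    (S : L.Substructure X) (hSW : (S : Set X) = W (Fin.last n))
    (hX : #X = (Order.succ)^[n + 1] β) (hU : #(USet L U X) = β) :
    (∀ i : Fin (n + 1), #(W i) = (Order.succ)^[(i : ℕ)] β) ∧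
      #S = (Order.succ)^[n] β ∧ #{x : S | (x : X) ∈ USet L U X} = β := by
  have hW0 : #(W 0) = β := ax.mk_W_zero.trans hU
  have hinf (i : Fin (n + 1)) : ℵ₀ ≤ #(W i) :=
    (hW0 ▸ hβ).trans (mk_le_mk_of_subset (ax.W_zero_subset i))
  have htop : Order.succ^[n] #(W 0) ≤ #(W (Fin.last n)) := by
    rw [← Order.succ_le_succ_iff, ← Function.iterate_succ_apply' Order.succ, hW0, ← hX]
    exact ax.mk_le_succ_mk_W_last (hinf _)
  have hW (i : Fin (n + 1)) : #(W i) = Order.succ^[i] β := hW0 ▸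
    Order.eq_iterate_succ_of_le_succ (a := fun i => #(W i))
      (fun i => ax.mk_W_succ_le i (hinf _)) htop i
  refine ⟨hW, (mk_congr (Equiv.setCongr hSW)).trans (hW _), hU ▸ ?_⟩
  refine mk_preimage_of_injective_of_subset_range _ _ Subtype.val_injective fun u hu => ?_
  exact ⟨⟨u, by rw [← SetLike.mem_coe, hSW]; exact ax.Usub hu⟩, rfl⟩

/-- the converse direction of Lemma 3.1: if `M⁺` is a model of `T⁺`
(axioms (2)–(7) together with the relativization of `T` to `W n`, encoded by a
substructure `S` with underlying set `W n` modelling `T`) whose universe has cardinality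
`β^{+(n+1)}` and in which `U` has cardinality `β`, then `|W i| = β^{+i}` for every
`i ≤ n`; in particular the `L`-structure on `W n` is a model of `T` of cardinality
`β^{+n}` in which `U` is interpreted by a set of cardinality `β`. -/
theorem stmt7 (L : FirstOrder.Language.{0,0}) (U : L.Relations 1) (T : L.Theory)
    (n : ℕ) (hn : 1 ≤ n) (β : Cardinal.{0}) (hβ : ℵ₀ ≤ β)
    (X : Type) [L.Structure X] (lt : X → X → Prop) (W : Fin (n + 1) → Set X)
    (Fneg : X → X → Prop) (Fi : Fin (n + 1) → X → X → X → Prop)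
    (ax : PlusAxioms L U n X lt W Fneg Fi)
    (S : L.Substructure X) (hSW : (S : Set X) = W (Fin.last n)) (hST : T.Model S)
    (hX : #X = (Order.succ)^[n + 1] β) (hU : #(USet L U X) = β) :
    (∀ i : Fin (n + 1), #(W i) = (Order.succ)^[(i : ℕ)] β) ∧
      #S = (Order.succ)^[n] β ∧ #{x : S | (x : X) ∈ USet L U X} = β :=
  stmt7_general L U n β hβ X lt W Fneg Fi ax S hSW hX hU
end

section
/- Let T⁺ be a theory in a language with unary predicates W₀,…,W_n and relations as in Lemma 3.1, and let M⁺ be a model of axioms (2)–(7). If x ∉ W_n^{M⁺} then the set of <-predecessors of x has cardinality exactly |W_n^{M⁺}|; consequently the universe of M⁺ has cardinality at most |W_n^{M⁺}|⁺. -/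
open FirstOrder Cardinal Set

/-! For `x ∉ W n`, `Fi n x` is the graph of a bijection from `W n` onto the predecessors of `x`,
so both have the same cardinality `μ = |W n|`; for `x ∈ W n` the predecessors lie in `W n`.
Hence every initial segment has at most `μ` elements. In such a linear order any `μ⁺` elements
have an upper bound: for infinite `μ` because the segments below them cover at most
`μ⁺ · μ = μ⁺` points, for finite `μ` because a finite set has a maximum. The segment below that
bound would have at least `μ⁺` elements, so the order cannot have more than `μ⁺` elements. -/

universe u

namespace Cardinal

theorem mk_le_succ_of_forall_mk_Iic_le {α : Type u} [LinearOrder α] {μ : Cardinal.{u}}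
    (h : ∀ x : α, #(Iic x) ≤ μ) : #α ≤ Order.succ μ := by
  by_contra! hlt
  have : Nonempty α := mk_ne_zero_iff.mp (pos_of_gt hlt).ne'
  obtain ⟨S, hS⟩ := le_mk_iff_exists_set.mp hlt.le
  have hbdd : BddAbove S := by
    rcases lt_or_ge μ ℵ₀ with hfin | hinf
    · exact Set.Finite.bddAbove <| lt_aleph0_iff_set_finite.mp <|
        hS ▸ isSuccLimit_aleph0.succ_lt hfin
    · by_contra hunb
      have hcover : (⋃ s ∈ S, Iic s) = Set.univ := by
        refine eq_univ_of_forall fun x => ?_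
        obtain ⟨s, hs, hxs⟩ := not_bddAbove_iff.mp hunb x
        exact mem_biUnion hs hxs.le
      refine hlt.not_ge ?_
      calc #α = #(⋃ s ∈ S, Iic s) := by rw [hcover, mk_univ]
        _ ≤ #S * ⨆ s : S, #(Iic (s : α)) := mk_biUnion_le _ _
        _ ≤ Order.succ μ * μ := mul_le_mul' hS.le (ciSup_le' fun s => h s)
        _ = Order.succ μ := by
          rw [mul_eq_max (hinf.trans (Order.le_succ μ)) hinf, max_eq_left (Order.le_succ μ)]
  obtain ⟨x, hx⟩ := hbdd
  exact (Order.lt_succ μ).not_ge (hS ▸ (mk_le_mk_of_subset hx).trans (h x))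

theorem mk_le_succ_of_isLinearOrder {α : Type u} (r : α → α → Prop) [IsLinearOrder α r]
    {μ : Cardinal.{u}} (h : ∀ x : α, #{z | r z x} ≤ μ) : #α ≤ Order.succ μ := by
  let : LinearOrder α :=
    { le := r
      le_refl := refl_of r
      le_trans _ _ _ := trans_of r
      le_antisymm _ _ := antisymm_of r
      le_total := total_of r
      toDecidableLE := Classical.decRel r }
  exact mk_le_succ_of_forall_mk_Iic_le h

theorem mk_relGraph_eq {α β : Type u} {R : α → β → Prop} {A : Set α}
    (hdom : ∀ a b, R a b → a ∈ A) (hfun : ∀ a ∈ A, ∃! b, R a b) :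
    #{p : α × β // R p.1 p.2} = #A := by
  refine mk_congr (Equiv.ofBijective (fun p => ⟨p.1.1, hdom _ _ p.2⟩) ⟨?_, ?_⟩)
  · rintro ⟨⟨a, b⟩, hab⟩ ⟨⟨a', b'⟩, hab'⟩ h
    obtain rfl : a = a' := congrArg Subtype.val h
    obtain rfl : b = b' := (hfun a (hdom _ _ hab)).unique hab hab'
    rfl
  · rintro ⟨a, ha⟩
    obtain ⟨b, hb, -⟩ := hfun a ha
    exact ⟨⟨(a, b), hb⟩, rfl⟩

theorem mk_eq_of_bijGraph {α β : Type u} {R : α → β → Prop} {A : Set α} {B : Set β}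
    (hdom : ∀ a b, R a b → a ∈ A ∧ b ∈ B) (hfun : ∀ a ∈ A, ∃! b, R a b)
    (hinv : ∀ b ∈ B, ∃! a, R a b) : #A = #B :=
  calc #A = #{p : α × β // R p.1 p.2} := (mk_relGraph_eq (fun a b h => (hdom a b h).1) hfun).symm
    _ = #{p : β × α // R p.2 p.1} := mk_congr ((Equiv.prodComm α β).subtypeEquiv fun _ => Iff.rfl)
    _ = #B := mk_relGraph_eq (fun b a h => (hdom a b h).2) hinv

end Cardinal

/-- in any model of axioms (2)–(7) of Lemma 3.1, if `x ∉ W n` then the set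
of `lt`-predecessors of `x` has cardinality exactly `|W n|`; consequently the universe
has cardinality at most `|W n|⁺`. -/
theorem stmt8 (L : FirstOrder.Language.{0,0}) (U : L.Relations 1) (n : ℕ)
    (X : Type) [L.Structure X] (lt : X → X → Prop) (W : Fin (n + 1) → Set X)
    (Fneg : X → X → Prop) (Fi : Fin (n + 1) → X → X → X → Prop)
    (ax : PlusAxioms L U n X lt W Fneg Fi) :
    (∀ x, x ∉ W (Fin.last n) → #{z : X | lt z x} = #(W (Fin.last n))) ∧
      #X ≤ Order.succ #(W (Fin.last n)) := by
  have hpred : ∀ x, x ∉ W (Fin.last n) → #{z : X | lt z x} = #(W (Fin.last n)) := fun x hx =>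
    (mk_eq_of_bijGraph (ax.Fn_dom x hx) (ax.Fn_fun x hx) (ax.Fn_inv x hx)).symm
  have := ax.linear
  refine ⟨hpred, mk_le_succ_of_isLinearOrder lt fun x => ?_⟩
  by_cases hx : x ∈ W (Fin.last n)
  · exact mk_le_mk_of_subset (ax.lastInitial x hx)
  · exact (hpred x hx).le
end

section
/- If κ is inaccessible and β < κ, then the Levy collapse Col(β⁺, <κ) has the κ-chain condition: every antichain has cardinality less than κ. -/
open Cardinal

/-- The Levy collapse `Col(β⁺, <κ)`: partial functions `p : β⁺ × κ → κ` with
`|dom p| ≤ β` and `p (α, lam) < lam` for all `(α, lam) ∈ dom p`.  Here `β⁺` and `κ`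
are represented by the canonical types of order type `(β⁺).ord` and `κ.ord`. -/
def LevyCond (β κ : Cardinal.{0}) : Type :=
  {p : ((Order.succ β).ord.ToType × κ.ord.ToType) →. κ.ord.ToType //
    #p.Dom ≤ β ∧ ∀ (x) (h : (p x).Dom), (p x).get h < x.2}

/-- `p` extends `q` (i.e. `p ≤ q` in the Levy collapse, ordered by reverse inclusion). -/
def LevyExtends {β κ : Cardinal.{0}} (p q : LevyCond β κ) : Prop :=
  ∀ x, (q.1 x).Dom → p.1 x = q.1 x

/-- Two conditions are compatible if they have a common extension. -/
def LevyCompatible {β κ : Cardinal.{0}} (p q : LevyCond β κ) : Prop :=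
  ∃ r : LevyCond β κ, LevyExtends r p ∧ LevyExtends r q

/-!
For a condition `p`, let `S p ⊆ κ` be the set of second coordinates of `dom p`, and let its
trace at `b < κ` be the restriction of `p` to `β⁺ × b`. As `κ` is a strong limit, there are fewer
than `κ` traces at each `b`; two conditions with the same trace at `b` whose sets `S` meet only
below `b` agree on their common domain, so their union is a common extension.

Such a pair exists among any `κ` conditions. Let `G b` bound `S` of one representative of each
trace at `b`, and build `b_α` for `α < β⁺` with `G b_γ < b_α` for `γ < α`, so that the
intervals `[b_α, G b_α)` are pairwise disjoint. Fewer than `κ` conditions have `S` bounded by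
some `G b_α`, as such a condition is determined by its trace at `b_α`. Any other `p` misses one
of the intervals, since `|S p| ≤ β`, and pairs with the representative of its trace there.
-/

open Set Function

universe u v

theorem Set.exists_disjoint_of_mk_lt {α : Type u} {J : Type v} {T : Set α} {I : J → Set α}
    (hI : Pairwise (Disjoint on I)) (hT : lift.{v} #T < lift.{u} #J) :
    ∃ j, Disjoint T (I j) := by
  by_contra! hmeet
  choose f hfT hfI using fun j => not_disjoint_iff.1 (hmeet j)
  have hf : Injective fun j => (⟨f j, hfT j⟩ : T) := fun i j hij => by
    by_contra hne
    exact (hI hne).ne_of_mem (hfI i) (hfI j) (congrArg Subtype.val hij)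
  exact hT.not_ge (lift_mk_le_lift_mk_of_injective hf)

namespace Cardinal

theorem IsStrongLimit.power_lt {a b c : Cardinal} (hc : c.IsStrongLimit) (ha : a < c)
    (hb : b < c) : a ^ b < c :=
  calc a ^ b ≤ (2 ^ a) ^ b := power_le_power_right (cantor a).le
    _ = 2 ^ (a * b) := power_mul.symm
    _ < c := hc.isStrongPrelimit (mul_lt_of_lt hc.aleph0_le ha hb)

theorem mk_Iio_ord_toType_lt {c : Cardinal.{u}} (i : c.ord.ToType) : #(Iio i) < c := by
  simpa using mk_Iio_lt i (by simp)

theorem IsRegular.exists_forall_lt {κ : Cardinal.{u}} (hκ : κ.IsRegular) {s : Set κ.ord.ToType}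
    (hs : #s < κ) : ∃ b, ∀ x ∈ s, x < b :=
  not_isCofinal_iff.1 fun hcof => (Order.cof_le hcof).not_gt <| by
    rwa [Ordinal.cof_toType, hκ.cof_ord]

theorem IsRegular.exists_seq_map_lt {κ θ : Cardinal.{u}} (hκ : κ.IsRegular) (hθ : θ < κ)
    (G : κ.ord.ToType → κ.ord.ToType) :
    ∃ b : θ.ord.ToType → κ.ord.ToType, ∀ γ α, γ < α → G (b γ) < b α := by
  have step : ∀ (α : θ.ord.ToType) (b : ∀ γ, γ < α → κ.ord.ToType),
      ∃ c, ∀ γ (h : γ < α), G (b γ h) < c := by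
    intro α b
    obtain ⟨c, hc⟩ := hκ.exists_forall_lt (s := range fun γ : Iio α => G (b γ.1 γ.2))
      (mk_range_le.trans_lt ((mk_Iio_ord_toType_lt α).trans hθ))
    exact ⟨c, fun γ h => hc _ ⟨⟨γ, h⟩, rfl⟩⟩
  choose c hc using step
  refine ⟨IsWellFounded.fix (· < ·) c, fun γ α h => ?_⟩
  rw [IsWellFounded.fix_eq (· < ·) c α]
  exact hc α (fun γ _ => IsWellFounded.fix (· < ·) c γ) γ h

/-- A weak Δ-system lemma: `c b i` plays the role of the restriction below `b` of the `i`-th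
condition, which determines it when `S i ⊆ Iio b`. -/
theorem IsRegular.exists_ne_eq_inter_subset_Iio {κ θ : Cardinal.{u}} (hκ : κ.IsRegular)
    (hθ : θ < κ) {ι : Type u} (hι : κ ≤ #ι) (S : ι → Set κ.ord.ToType) (hS : ∀ i, #(S i) < θ)
    {C : κ.ord.ToType → Type u} (hC : ∀ b, #(C b) < κ) (c : ∀ b, ι → C b)
    (hc : ∀ b, InjOn (c b) {i | S i ⊆ Iio b}) :
    ∃ b i j, i ≠ j ∧ c b i = c b j ∧ S i ∩ S j ⊆ Iio b := by
  have hG : ∀ b, ∃ g, ∀ i, ∃ j, c b j = c b i ∧ S j ⊆ Iio g := by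
    intro b
    choose rep hrep using fun τ : range (c b) => τ.2
    obtain ⟨g, hg⟩ := hκ.exists_forall_lt (s := ⋃ τ, S (rep τ))
      ((card_iUnion_lt_iff_forall_of_isRegular (t := fun τ => S (rep τ)) hκ
        ((mk_set_le _).trans_lt (hC b))).2 fun τ => (hS _).trans hθ)
    exact ⟨g, fun i => ⟨rep ⟨_, i, rfl⟩, hrep _, fun x hx => hg x (mem_iUnion.2 ⟨_, hx⟩)⟩⟩
  choose G hG using hG
  obtain ⟨b, hb⟩ := hκ.exists_seq_map_lt hθ G
  obtain ⟨i₀, hi₀⟩ : ∃ i₀, ∀ γ, ¬ S i₀ ⊆ Iio (G (b γ)) := by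
    by_contra! hcover
    have hsmall : #(⋃ γ, {i | S i ⊆ Iio (G (b γ))}) < κ :=
      (card_iUnion_lt_iff_forall_of_isRegular hκ ((mk_ord_toType θ).trans_lt hθ)).2 fun γ =>
        (mk_le_of_injective (hc _).injective).trans_lt (hC _)
    rw [show (⋃ γ, {i | S i ⊆ Iio (G (b γ))}) = Set.univ from
      eq_univ_of_forall fun i => mem_iUnion.2 (hcover i), mk_univ] at hsmall
    exact hsmall.not_ge hι
  have hdisj : Pairwise (Disjoint on fun γ => Ico (b γ) (G (b γ))) := by
    refine fun γ α hne => hne.lt_or_gt.elim (fun h => ?_) fun h => ?_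
    · exact disjoint_left.2 fun x h1 h2 => lt_irrefl x (h1.2.trans ((hb γ α h).trans_le h2.1))
    · exact disjoint_left.2 fun x h1 h2 => lt_irrefl x (h2.2.trans ((hb α γ h).trans_le h1.1))
  obtain ⟨γ, hγ⟩ := exists_disjoint_of_mk_lt hdisj (by simpa using hS i₀)
  obtain ⟨j, hj, hjS⟩ := hG (b γ) i₀
  refine ⟨b γ, i₀, j, fun h => hi₀ γ (h ▸ hjS), hj.symm, fun x ⟨hx₀, hxj⟩ => ?_⟩
  by_contra hx
  exact hγ.ne_of_mem hx₀ ⟨not_lt.1 hx, hjS hxj⟩ rfl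

end Cardinal

namespace LevyCond

variable {β κ : Cardinal.{0}}

open Classical in
/-- Values lie in `Iio b` since `p (α, λ) < λ < b`; this keeps the number of traces below `κ`. -/
noncomputable def trace (p : LevyCond β κ) (b : κ.ord.ToType) :
    (Order.succ β).ord.ToType × Iio b → Option (Iio b) := fun x =>
  if h : (p.1 (x.1, x.2)).Dom then some ⟨(p.1 _).get h, (p.2.2 _ h).trans x.2.2⟩ else none

theorem apply_eq_of_trace_eq {p q : LevyCond β κ} {b : κ.ord.ToType} (h : p.trace b = q.trace b)
    {x : (Order.succ β).ord.ToType × κ.ord.ToType} (hx : x.2 < b) : p.1 x = q.1 x := by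
  have hx' := congrFun h (x.1, ⟨x.2, hx⟩)
  simp only [trace] at hx'
  split_ifs at hx' with hp hq hq
  · exact Part.ext' (iff_of_true hp hq) fun _ _ => congrArg Subtype.val (Option.some.inj hx')
  · exact Part.ext' (iff_of_false hp hq) fun hp' _ => absurd hp' hp

theorem mk_trace_lt (hκ : κ.IsStrongLimit) (hβ : Order.succ β < κ) (b : κ.ord.ToType) :
    #((Order.succ β).ord.ToType × Iio b → Option (Iio b)) < κ := by
  have hb := mk_Iio_ord_toType_lt b
  rw [← power_def, mk_option, mk_prod, lift_id, lift_id, mk_ord_toType]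
  exact hκ.power_lt (add_lt_of_lt hκ.aleph0_le hb (one_lt_aleph0.trans_le hκ.aleph0_le))
    (mul_lt_of_lt hκ.aleph0_le hβ hb)

theorem injOn_trace (b : κ.ord.ToType) :
    InjOn (trace · b) {p : LevyCond β κ | Prod.snd '' p.1.Dom ⊆ Iio b} := by
  intro p hp q hq h
  refine Subtype.ext (funext fun x => ?_)
  by_cases hx : x.2 < b
  · exact apply_eq_of_trace_eq h hx
  · rw [Part.eq_none_iff'.2 fun hd => hx (hp ⟨x, hd, rfl⟩),
      Part.eq_none_iff'.2 fun hd => hx (hq ⟨x, hd, rfl⟩)]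

end LevyCond

open Classical in
theorem levyCompatible_of_agree {β κ : Cardinal.{0}} (hβ : ℵ₀ ≤ β) {p q : LevyCond β κ}
    (h : ∀ x, (p.1 x).Dom → (q.1 x).Dom → p.1 x = q.1 x) : LevyCompatible p q := by
  let r : (Order.succ β).ord.ToType × κ.ord.ToType →. κ.ord.ToType :=
    fun x => if (p.1 x).Dom then p.1 x else q.1 x
  have hr : ∀ x, r x = p.1 x ∨ r x = q.1 x := fun x => by
    by_cases hp : (p.1 x).Dom <;> simp [r, hp]
  refine ⟨⟨r, ?_, fun x hx => ?_⟩, fun x hx => if_pos hx, fun x hx => ?_⟩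
  · calc #r.Dom ≤ #(p.1.Dom ∪ q.1.Dom : Set _) :=
          mk_le_mk_of_subset fun x (hx : (r x).Dom) =>
            (hr x).imp (fun h : r x = p.1 x => (h ▸ hx : (p.1 x).Dom))
              fun h : r x = q.1 x => (h ▸ hx : (q.1 x).Dom)
      _ ≤ β + β := (mk_union_le _ _).trans (add_le_add p.2.1 q.2.1)
      _ = β := add_eq_self hβ
  · rcases hr x with h | h
    · exact (Part.get_eq_get_of_eq _ hx h).trans_lt (p.2.2 x _)
    · exact (Part.get_eq_get_of_eq _ hx h).trans_lt (q.2.2 x _)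
  · by_cases hp : (p.1 x).Dom
    · exact (if_pos hp).trans (h x hp hx)
    · exact if_neg hp

/-- if `κ` is inaccessible and `β < κ`, then the Levy collapse
`Col(β⁺, <κ)` has the `κ`-chain condition: every antichain has cardinality `< κ`. -/
theorem stmt11 (β κ : Cardinal.{0}) (hβ : β.IsRegular) (hκ : κ.IsInaccessible)
    (hβκ : β < κ) (A : Set (LevyCond β κ))
    (hA : ∀ p ∈ A, ∀ q ∈ A, p ≠ q → ¬ LevyCompatible p q) : #A < κ := by
  by_contra! hAκ
  have hsucc : Order.succ β < κ :=
    (Order.succ_le_of_lt (cantor β)).trans_lt (hκ.isStrongLimit.isStrongPrelimit hβκ)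
  obtain ⟨b, p, q, hpq, htrace, hdom⟩ := hκ.isRegular.exists_ne_eq_inter_subset_Iio hsucc hAκ
    (fun p : A => Prod.snd '' p.1.1.Dom)
    (fun p => mk_image_le.trans_lt (p.1.2.1.trans_lt (Order.lt_succ β)))
    (LevyCond.mk_trace_lt hκ.isStrongLimit hsucc) (fun b p => p.1.trace b)
    (fun b => (LevyCond.injOn_trace b).comp Subtype.val_injective.injOn fun _ hp => hp)
  refine hA p p.2 q q.2 (Subtype.val_injective.ne hpq)
    (levyCompatible_of_agree hβ.aleph0_le fun x hp hq => ?_)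
  exact LevyCond.apply_eq_of_trace_eq htrace (hdom ⟨⟨x, hp, rfl⟩, ⟨x, hq, rfl⟩⟩)
end

section
/- Assume ◊⁺_{β⁺} holds for a regular cardinal β. Then there exists a β⁺-Kurepa tree, i.e., a tree of height β⁺ all of whose levels have cardinality at most β, with at least β⁺⁺ cofinal branches. -/
open Cardinal Set

/-- The restriction of `<` to the set of predecessors of `t`. -/
def predRel {T : Type*} [PartialOrder T] (t : T) : Set.Iio t → Set.Iio t → Prop :=
  fun a b => (a : T) < (b : T)

/-- A set-theoretic tree: a partial order in which the predecessors of every point are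
well-ordered. -/
structure STree : Type 1 where
  carrier : Type
  [po : PartialOrder carrier]
  wo : ∀ t : carrier, IsWellOrder (Set.Iio t) (predRel t)

attribute [instance] STree.po

/-- The height (level) of a node: the order type of its set of predecessors. -/
noncomputable def STree.ht (S : STree) (t : S.carrier) : Ordinal.{0} :=
  @Ordinal.type _ (predRel t) (S.wo t)

/-- The `α`-th level of the tree. -/
def STree.Level (S : STree) (α : Ordinal.{0}) : Set S.carrier := {t | S.ht t = α}

/-- A cofinal branch of length `h`: a chain meeting every level `α < h`. -/
def STree.IsCofinalBranch (S : STree) (h : Ordinal.{0}) (b : Set S.carrier) : Prop :=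
  IsChain (· ≤ ·) b ∧ ∀ α < h, ∃ t ∈ b, t ∈ S.Level α

/-- `S` is a `β⁺`-Kurepa tree: a tree of height `β⁺` all of whose levels are nonempty of
cardinality at most `β`, with at least `β⁺⁺` cofinal branches. -/
def IsKurepaTree (β : Cardinal.{0}) (S : STree) : Prop :=
  (∀ t : S.carrier, S.ht t < (Order.succ β).ord) ∧
  (∀ α < (Order.succ β).ord, (S.Level α).Nonempty ∧ #(S.Level α) ≤ β) ∧
  Order.succ (Order.succ β) ≤ #{b : Set S.carrier | S.IsCofinalBranch (Order.succ β).ord b}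

/-- A club subset of a linear order: unbounded, and closed under suprema of its bounded
nonempty initial parts. -/
def IsClubIn {α : Type*} [LinearOrder α] (C : Set α) : Prop :=
  (∀ x, ∃ y ∈ C, x < y) ∧
  ∀ x, (C ∩ Set.Iio x).Nonempty → IsLUB (C ∩ Set.Iio x) x → x ∈ C

/-- `◊⁺_{β⁺}`: there is a sequence `⟨S_α : α < β⁺⟩` with each `S_α` a family of at most
`β` subsets of `α`, such that for every `X ⊆ β⁺` there is a club `C ⊆ β⁺` with
`X ∩ α ∈ S_α` and `C ∩ α ∈ S_α` for every `α ∈ C`.  Here `β⁺` is represented by the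
canonical type of order type `(β⁺).ord`. -/
def DiamondPlus (β : Cardinal.{0}) : Prop :=
  ∃ S : (Order.succ β).ord.ToType → Set (Set (Order.succ β).ord.ToType),
    (∀ α, #(S α) ≤ β ∧ ∀ s ∈ S α, s ⊆ Set.Iio α) ∧
    ∀ X : Set (Order.succ β).ord.ToType, ∃ C, IsClubIn C ∧
      ∀ α ∈ C, X ∩ Set.Iio α ∈ S α ∧ C ∩ Set.Iio α ∈ S α

/-!
Under `◊⁺`, every `X ⊆ β⁺` comes with a club `C` such that `X ∩ ξ` and `C ∩ ξ` are guessed by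
the sequence at every `ξ ∈ C`. A node of the tree at level `γ` remembers such a guess at the
last point `ξ ≤ γ` of the club (or nothing, if the club has not yet started), so it is determined
by `ξ` and two members of `S_ξ`, and each level has at most `β` nodes. Restricting a node to a
lower level `γ'` moves to the last point of `C ∩ ξ` up to `γ'`; since clubs are closed this point
is again in the club, so its data still come from the guessing sequence. Each `X` threads a
cofinal branch through the tree, and distinct sets `X` give distinct branches because their clubs
are unbounded; this yields `2^{β⁺} ≥ β⁺⁺` branches.
-/

namespace DiamondKurepa

section LinearOrder

variable {O : Type} [LinearOrder O]

def ClosedAt (c : Set O) (x : O) : Prop :=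
  (c ∩ Iio x).Nonempty → IsLUB (c ∩ Iio x) x → x ∈ c

theorem closedAt_inter_Iio {c : Set O} {x l : O} (hx : x < l) (h : ClosedAt c x) :
    ClosedAt (c ∩ Iio l) x := by
  intro hne hlub
  rw [inter_assoc, Iio_inter_Iio, min_eq_right hx.le] at hne hlub
  exact ⟨h hne hlub, hx⟩

def Guessed (S : O → Set (Set O)) (s c : Set O) : Prop :=
  ∀ ζ ∈ c, s ∩ Iio ζ ∈ S ζ ∧ c ∩ Iio ζ ∈ S ζ

theorem Guessed.inter_Iio {S : O → Set (Set O)} {s c : Set O} (hg : Guessed S s c) (l : O) :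
    Guessed S (s ∩ Iio l) (c ∩ Iio l) := by
  intro ζ hζ
  simp only [inter_assoc, Iio_inter_Iio, min_eq_right hζ.2.le]
  exact hg ζ hζ.1

/-- A mark `(ξ, s, c)` records the guesses `s = X ∩ ξ` and `c = C ∩ ξ` made at a club point
`ξ`. -/
abbrev Mark (O : Type) := O × Set O × Set O

abbrev Node (O : Type) := O × Option (Mark O)

variable (S : O → Set (Set O))

def Valid : Node O → Prop
  | (_, none) => True
  | (γ, some (ξ, s, c)) => ξ ≤ γ ∧ s ∈ S ξ ∧ c ∈ S ξ ∧ (∀ x < ξ, ClosedAt c x) ∧ Guessed S s c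

def ValidNode := {n : Node O // Valid S n}

variable {S}

open Classical in
noncomputable def decode (γ : O) (u : Option (Σ ξ : Iic γ, S ξ.1 × S ξ.1)) :
    {t : ValidNode S | t.1.1 = γ} :=
  match u with
  | some ⟨ξ, s, c⟩ =>
    if h : Valid S (γ, some (ξ.1, s.1, c.1)) then ⟨⟨_, h⟩, rfl⟩ else ⟨⟨(γ, none), trivial⟩, rfl⟩
  | none => ⟨⟨(γ, none), trivial⟩, rfl⟩

theorem decode_surjective (γ : O) : Function.Surjective (decode (S := S) γ) := by
  rintro ⟨⟨⟨γ', _ | ⟨ξ, s, c⟩⟩, hv⟩, rfl : γ' = γ⟩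
  · exact ⟨none, rfl⟩
  · exact ⟨some ⟨⟨ξ, hv.1⟩, ⟨s, hv.2.1⟩, ⟨c, hv.2.2.1⟩⟩, by simp only [decode, dif_pos hv]⟩

theorem mk_level_le {β : Cardinal.{0}} (hβ : ℵ₀ ≤ β) (hS : ∀ ξ, #(S ξ) ≤ β) {γ : O}
    (hγ : #(Iic γ) ≤ β) : #{t : ValidNode S | t.1.1 = γ} ≤ β := by
  have hsum : (Cardinal.sum fun ξ : Iic γ => #(S ξ.1 × S ξ.1)) ≤ β :=
    calc _ ≤ Cardinal.sum fun _ : Iic γ => β :=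
          Cardinal.sum_le_sum _ _ fun ξ => by
            rw [mk_prod, lift_id]; exact mul_le_of_le hβ (hS ξ) (hS ξ)
      _ = #(Iic γ) * β := sum_const' _ _
      _ ≤ β := mul_le_of_le hβ hγ le_rfl
  calc _ ≤ #(Option (Σ ξ : Iic γ, S ξ.1 × S ξ.1)) := mk_le_of_surjective (decode_surjective γ)
    _ ≤ β := by
      rw [mk_option, mk_sigma]
      exact add_le_of_le hβ hsum (one_le_aleph0.trans hβ)

end LinearOrder

variable {O : Type} [LinearOrder O] [WellFoundedLT O] {S : O → Set (Set O)}

noncomputable def lub (c : Set O) (γ : O) : O :=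
  wellFounded_lt.min (upperBounds (c ∩ Iic γ)) ⟨γ, fun _ hx => hx.2⟩

theorem isLUB_lub (c : Set O) (γ : O) : IsLUB (c ∩ Iic γ) (lub c γ) :=
  ⟨wellFounded_lt.min_mem _ _, fun _ hu => not_lt.1 (wellFounded_lt.not_lt_min _ hu)⟩

theorem lub_le_self (c : Set O) (γ : O) : lub c γ ≤ γ :=
  (isLUB_lub c γ).2 fun _ hx => hx.2

theorem lub_congr {c d : Set O} {γ δ : O} (h : c ∩ Iic γ = d ∩ Iic δ) : lub c γ = lub d δ :=
  (isLUB_lub c γ).unique (h ▸ isLUB_lub d δ)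

theorem lub_eq_self {c : Set O} {γ : O} (h : γ ∈ c) : lub c γ = γ :=
  (isLUB_lub c γ).unique ⟨fun _ hx => hx.2, fun _ hu => hu ⟨h, le_rfl⟩⟩

theorem lub_mem {c : Set O} {γ : O} (hcl : ∀ x ≤ γ, ClosedAt c x)
    (hne : (c ∩ Iic γ).Nonempty) : lub c γ ∈ c := by
  by_contra hmem
  have hIio : c ∩ Iio (lub c γ) = c ∩ Iic γ := by
    ext x
    refine ⟨fun hx => ⟨hx.1, hx.2.le.trans (lub_le_self c γ)⟩, fun hx => ⟨hx.1, ?_⟩⟩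
    exact ((isLUB_lub c γ).1 hx).lt_of_ne fun h => hmem (h ▸ hx.1)
  exact hmem (hcl _ (lub_le_self c γ) (hIio ▸ hne) (hIio ▸ isLUB_lub c γ))

open Classical in
/-- The mark that `X = s` and `C = c` leave at level `γ`: the guess at the last point of `c` up
to `γ`. -/
noncomputable def cut (s c : Set O) (γ : O) : Option (Mark O) :=
  if (c ∩ Iic γ).Nonempty then some (lub c γ, s ∩ Iio (lub c γ), c ∩ Iio (lub c γ)) else none

noncomputable def restrictMark : Option (Mark O) → O → Option (Mark O)
  | none, _ => none
  | some (ξ, s, c), γ => if ξ ≤ γ then some (ξ, s, c) else cut s c γ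

noncomputable def restrict (n : Node O) (γ : O) : Node O := (γ, restrictMark n.2 γ)

theorem cut_of_mem {s c : Set O} {γ : O} (h : γ ∈ c) :
    cut s c γ = some (γ, s ∩ Iio γ, c ∩ Iio γ) := by
  rw [cut, if_pos ⟨γ, h, le_rfl⟩, lub_eq_self h]

theorem cut_congr {s c : Set O} {γ δ : O} (h : c ∩ Iic γ = c ∩ Iic δ) : cut s c γ = cut s c δ := by
  rw [cut, cut, lub_congr h, h]

theorem cut_inter_Iio {s c : Set O} {γ l : O} (h : γ < l) :
    cut (s ∩ Iio l) (c ∩ Iio l) γ = cut s c γ := by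
  have hIic : c ∩ Iio l ∩ Iic γ = c ∩ Iic γ := by
    ext x
    exact ⟨fun hx => ⟨hx.1.1, hx.2⟩, fun hx => ⟨⟨hx.1, hx.2.trans_lt h⟩, hx.2⟩⟩
  have hl : min l (lub c γ) = lub c γ := min_eq_right ((lub_le_self c γ).trans h.le)
  rw [cut, cut, lub_congr hIic, hIic]
  simp only [inter_assoc, Iio_inter_Iio, hl]

theorem restrictMark_cut {s c : Set O} {γ₁ γ₂ : O} (h : γ₁ ≤ γ₂) :
    restrictMark (cut s c γ₂) γ₁ = cut s c γ₁ := by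
  by_cases hne : (c ∩ Iic γ₂).Nonempty
  · rw [cut, if_pos hne, restrictMark]
    split_ifs with hle
    · have hIic : c ∩ Iic γ₁ = c ∩ Iic γ₂ :=
        Subset.antisymm (inter_subset_inter_right c (Iic_subset_Iic.2 h))
          fun x hx => ⟨hx.1, ((isLUB_lub c γ₂).1 hx).trans hle⟩
      rw [cut_congr hIic, cut, if_pos hne]
    · exact cut_inter_Iio (not_le.1 hle)
  · have hne₁ : ¬ (c ∩ Iic γ₁).Nonempty := fun ⟨x, hx⟩ => hne ⟨x, hx.1, hx.2.trans h⟩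
    rw [cut, if_neg hne, cut, if_neg hne₁, restrictMark]

theorem restrictMark_restrictMark (m : Option (Mark O)) {γ₁ γ₂ : O} (h : γ₁ ≤ γ₂) :
    restrictMark (restrictMark m γ₂) γ₁ = restrictMark m γ₁ := by
  rcases m with _ | ⟨ξ, s, c⟩
  · rfl
  by_cases h₂ : ξ ≤ γ₂
  · rw [restrictMark, if_pos h₂]
  · rw [restrictMark, if_neg h₂, restrictMark_cut h, restrictMark,
      if_neg fun h₁ => h₂ (h₁.trans h)]

theorem restrict_restrict (n : Node O) {γ₁ γ₂ : O} (h : γ₁ ≤ γ₂) :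
    restrict (restrict n γ₂) γ₁ = restrict n γ₁ :=
  Prod.ext rfl (restrictMark_restrictMark n.2 h)

theorem valid_cut {s c : Set O} {γ : O} (hcl : ∀ x ≤ γ, ClosedAt c x) (hg : Guessed S s c) :
    Valid S (γ, cut s c γ) := by
  rw [cut]
  split_ifs with hne
  · have hl := lub_mem hcl hne
    exact ⟨lub_le_self c γ, hg _ hl |>.1, hg _ hl |>.2,
      fun x hx => closedAt_inter_Iio hx (hcl x (hx.le.trans (lub_le_self c γ))), hg.inter_Iio _⟩
  · trivial

theorem valid_restrict {n : Node O} (hv : Valid S n) (γ : O) : Valid S (restrict n γ) := by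
  rcases n with ⟨δ, _ | ⟨ξ, s, c⟩⟩
  · trivial
  obtain ⟨-, hs, hc, hcl, hg⟩ := hv
  by_cases hξ : ξ ≤ γ
  · simpa only [restrict, restrictMark, if_pos hξ] using ⟨hξ, hs, hc, hcl, hg⟩
  · simpa only [restrict, restrictMark, if_neg hξ] using
      valid_cut (fun x hx => hcl x (hx.trans_lt (not_le.1 hξ))) hg

theorem restrict_self {n : Node O} (hv : Valid S n) : restrict n n.1 = n := by
  rcases n with ⟨δ, _ | ⟨ξ, s, c⟩⟩
  · rfl
  · simp only [restrict, restrictMark, if_pos hv.1]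

instance : PartialOrder (ValidNode S) where
  le a b := a.1.1 ≤ b.1.1 ∧ a.1 = restrict b.1 a.1.1
  le_refl a := ⟨le_rfl, (restrict_self a.2).symm⟩
  le_trans a b c hab hbc :=
    ⟨hab.1.trans hbc.1, hab.2.trans (by rw [hbc.2, restrict_restrict _ hab.1])⟩
  le_antisymm a b hab hba := by
    have hlev : a.1.1 = b.1.1 := le_antisymm hab.1 hba.1
    exact Subtype.ext (by rw [hab.2, hlev, restrict_self b.2])

theorem lt_iff {a b : ValidNode S} : a < b ↔ a.1.1 < b.1.1 ∧ a.1 = restrict b.1 a.1.1 := by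
  rw [lt_iff_le_and_ne]
  refine ⟨fun ⟨⟨hle, hab⟩, hne⟩ => ⟨hle.lt_of_ne fun h => hne ?_, hab⟩,
    fun ⟨hlt, hab⟩ => ⟨⟨hlt.le, hab⟩, fun h => hlt.ne (h ▸ rfl)⟩⟩
  exact Subtype.ext (by rw [hab, h, restrict_self b.2])

noncomputable def predIso (b : ValidNode S) :
    Subrel ((· < ·) : O → O → Prop) (· ∈ Iio b.1.1) ≃r predRel b where
  toFun γ := ⟨⟨restrict b.1 γ.1, valid_restrict b.2 γ.1⟩, lt_iff.2 ⟨γ.2, rfl⟩⟩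
  invFun a := ⟨a.1.1.1, (lt_iff.1 a.2).1⟩
  left_inv _ := rfl
  right_inv a := Subtype.ext (Subtype.ext (lt_iff.1 a.2).2.symm)
  map_rel_iff' {γ₁ γ₂} := by
    change (_ : ValidNode S) < _ ↔ _
    rw [lt_iff]
    exact ⟨And.left, fun h => ⟨h, (restrict_restrict b.1 h.le).symm⟩⟩

variable (S) in
noncomputable def tree : STree where
  carrier := ValidNode S
  wo b := (predIso b).symm.toRelEmbedding.isWellOrder

theorem ht_tree (t : (tree S).carrier) :
    (tree S).ht t = Ordinal.typein ((· < ·) : O → O → Prop) t.1.1 := by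
  have := (tree S).wo t
  rw [← Ordinal.type_subrel]
  exact Ordinal.type_eq.2 ⟨(predIso t).symm⟩

theorem mem_level_nonempty_and_mk_le {t : (tree S).carrier} {γ : O} :
    t ∈ (tree S).Level (Ordinal.typein ((· < ·) : O → O → Prop) γ) ↔ t.1.1 = γ := by
  rw [STree.Level, mem_ofPred_eq, ht_tree]
  exact (Ordinal.typein_injective _).eq_iff

noncomputable def branchNode (X C : Set O) (γ : O) : Node O := (γ, cut X C γ)

theorem restrict_branchNode (X C : Set O) {γ₁ γ₂ : O} (h : γ₁ ≤ γ₂) :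
    restrict (branchNode X C γ₂) γ₁ = branchNode X C γ₁ :=
  Prod.ext rfl (restrictMark_cut h)

theorem subset_of_cut_eq {X Y C D : Set O} (hC : ∀ δ, ∃ γ ∈ C, δ < γ)
    (h : ∀ γ, cut X C γ = cut Y D γ) : X ⊆ Y := by
  intro δ hδ
  obtain ⟨γ, hγC, hδγ⟩ := hC δ
  have hXY := h γ
  rw [cut_of_mem hγC, cut] at hXY
  split_ifs at hXY
  simp only [Option.some.injEq, Prod.mk.injEq] at hXY
  obtain ⟨hγ, hXY, -⟩ := hXY
  rw [← hγ] at hXY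
  exact (hXY.subset ⟨hδ, hδγ⟩).1

variable (S) in
def branch (X C : Set O) (hC : IsClubIn C) (hg : Guessed S X C) : Set (tree S).carrier :=
  range fun γ => (⟨branchNode X C γ, valid_cut (fun x _ => hC.2 x) hg⟩ : ValidNode S)

theorem isChain_branch {X C : Set O} (hC : IsClubIn C) (hg : Guessed S X C) :
    IsChain (· ≤ ·) (branch S X C hC hg) := by
  rintro _ ⟨γ₁, rfl⟩ _ ⟨γ₂, rfl⟩ -
  rcases le_total γ₁ γ₂ with h | h
  · exact Or.inl ⟨h, (restrict_branchNode X C h).symm⟩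
  · exact Or.inr ⟨h, (restrict_branchNode X C h).symm⟩

theorem branch_injective {C : Set O → Set O} (hC : ∀ X, IsClubIn (C X))
    (hg : ∀ X, Guessed S X (C X)) :
    Function.Injective fun X => branch S X (C X) (hC X) (hg X) := by
  intro X Y h
  dsimp only at h
  have hcut : ∀ γ, cut X (C X) γ = cut Y (C Y) γ := fun γ => by
    have hmem : _ ∈ branch S X (C X) (hC X) (hg X) := mem_range_self γ
    rw [h] at hmem
    obtain ⟨γ', hγ'⟩ := hmem
    obtain ⟨rfl, hm⟩ := Prod.ext_iff.1 (congrArg Subtype.val hγ')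
    exact hm.symm
  exact (subset_of_cut_eq (hC X).1 hcut).antisymm
    (subset_of_cut_eq (hC Y).1 fun γ => (hcut γ).symm)

section Kurepa

variable {β : Cardinal.{0}}

theorem exists_typein_eq (hO : Ordinal.type ((· < ·) : O → O → Prop) = (Order.succ β).ord)
    {α : Ordinal.{0}} (hα : α < (Order.succ β).ord) :
    ∃ γ : O, Ordinal.typein ((· < ·) : O → O → Prop) γ = α :=
  Ordinal.typein_surj _ (hO ▸ hα)

theorem mk_Iic_le (hβ : ℵ₀ ≤ β)
    (hO : Ordinal.type ((· < ·) : O → O → Prop) = (Order.succ β).ord) (γ : O) :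
    #(Iic γ) ≤ β := by
  have hIio : #(Iio γ) ≤ β := by
    have hγ := hO ▸ Ordinal.typein_lt_type ((· < ·) : O → O → Prop) γ
    rw [← Order.lt_succ_iff]
    exact (Ordinal.card_typein (r := ((· < ·) : O → O → Prop)) γ).symm.trans_lt (lt_ord.1 hγ)
  rw [← Iio_insert]
  exact mk_insert_le.trans (add_le_of_le hβ hIio (one_le_aleph0.trans hβ))

theorem ht_tree_lt (hO : Ordinal.type ((· < ·) : O → O → Prop) = (Order.succ β).ord)
    (t : (tree S).carrier) : (tree S).ht t < (Order.succ β).ord :=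
  ht_tree t ▸ hO ▸ Ordinal.typein_lt_type _ _

theorem level_nonempty_and_mk_le (hβ : ℵ₀ ≤ β) (hS : ∀ ξ, #(S ξ) ≤ β)
    (hO : Ordinal.type ((· < ·) : O → O → Prop) = (Order.succ β).ord)
    {α : Ordinal.{0}} (hα : α < (Order.succ β).ord) :
    ((tree S).Level α).Nonempty ∧ #((tree S).Level α) ≤ β := by
  obtain ⟨γ, rfl⟩ := exists_typein_eq hO hα
  have hlevel : (tree S).Level (Ordinal.typein _ γ) = {t : ValidNode S | t.1.1 = γ} :=
    ext fun _ => mem_level_nonempty_and_mk_le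
  rw [hlevel]
  exact ⟨⟨⟨(γ, none), trivial⟩, rfl⟩, mk_level_le hβ hS (mk_Iic_le hβ hO γ)⟩

theorem succ_succ_le_mk_cofinalBranch
    (hO : Ordinal.type ((· < ·) : O → O → Prop) = (Order.succ β).ord)
    (hguess : ∀ X : Set O, ∃ C, IsClubIn C ∧ Guessed S X C) :
    Order.succ (Order.succ β) ≤
      #{b : Set (tree S).carrier | (tree S).IsCofinalBranch (Order.succ β).ord b} := by
  choose C hC hg using hguess
  have hcofinal :
      ∀ X, (tree S).IsCofinalBranch (Order.succ β).ord (branch S X (C X) (hC X) (hg X)) :=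
    fun X => ⟨isChain_branch (hC X) (hg X), fun α hα => by
      obtain ⟨γ, rfl⟩ := exists_typein_eq hO hα
      exact ⟨_, mem_range_self γ, mem_level_nonempty_and_mk_le.2 rfl⟩⟩
  have hO' : #O = Order.succ β := by rw [← Ordinal.card_type (· < ·), hO, card_ord]
  calc Order.succ (Order.succ β) ≤ 2 ^ #O := Order.succ_le_of_lt (hO' ▸ cantor _)
    _ = #(Set O) := mk_set.symm
    _ ≤ _ := mk_le_of_injective (f := fun X => ⟨_, hcofinal X⟩)
      fun _ _ h => branch_injective hC hg (congrArg Subtype.val h)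

end Kurepa

end DiamondKurepa

/-- if `◊⁺_{β⁺}` holds for a regular cardinal `β`, then there exists a
`β⁺`-Kurepa tree. -/
theorem stmt12 (β : Cardinal.{0}) (hβ : β.IsRegular) (hD : DiamondPlus β) :
    ∃ S : STree, IsKurepaTree β S := by
  obtain ⟨S, hS, hguess⟩ := hD
  have hO := Ordinal.type_toType (Order.succ β).ord
  exact ⟨DiamondKurepa.tree S, DiamondKurepa.ht_tree_lt hO,
    fun _ => DiamondKurepa.level_nonempty_and_mk_le hβ.aleph0_le (fun ξ => (hS ξ).1) hO,
    DiamondKurepa.succ_succ_le_mk_cofinalBranch hO hguess⟩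
end
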